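/- For the non-flag complex K = ∂Δ^(m-1) on vertex set V = {1,…,m} (m > 2) and a group G, the colimit in the category of groups of the exponential diagram G^K (assigning to each face σ ∈ K the direct product G^σ and to each inclusion σ ⊆ τ the canonical inclusion G^σ → G^τ) is isomorphic to the full direct product G^m. -/

import Mathlib

/-- For `m > 2` and `K = ∂Δ^{m-1}` (the faces are the proper subsets of `{1,…,m}`), the
colimit in the category of groups of the exponential diagram `G^K` — which assigns to
each face `σ` the direct product `G^σ` and to each inclusion `σ ⊆ τ` the canonical
(extension-by-identity) inclusion `G^σ → G^τ` — is the full direct product `G^m`, with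
the canonical maps being the inclusions `G^σ → G^m`.  This is expressed by the universal
property: any compatible family of homomorphisms `G^σ → H` factors uniquely through
`G^m`. -/
theorem colim_exponential_diagram_boundary_simplex (m : ℕ) (hm : 2 < m)
    (G : Type*) [Group G] :
    ∀ (H : Type*) [Group H]
      (f : ∀ σ : Finset (Fin m), σ ≠ Finset.univ → ((↥σ → G) →* H)),
      (∀ (σ τ : Finset (Fin m)) (hσ : σ ≠ Finset.univ) (hτ : τ ≠ Finset.univ)
          (_ : σ ⊆ τ) (g : ↥σ → G),
        f τ hτ (fun x => if h : (x : Fin m) ∈ σ then g ⟨x, h⟩ else 1) = f σ hσ g) →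
      ∃! F : (Fin m → G) →* H,
        ∀ (σ : Finset (Fin m)) (hσ : σ ≠ Finset.univ) (g : ↥σ → G),
          F (fun i => if h : i ∈ σ then g ⟨i, h⟩ else 1) = f σ hσ g := by
  intro H _ f hcomp
  classical
  have hsmall : ∀ σ : Finset (Fin m), σ.card < m → σ ≠ Finset.univ := by
    intro σ hc he
    rw [he, Finset.card_univ, Fintype.card_fin] at hc
    exact lt_irrefl _ hc
  have hsing : ∀ i : Fin m, ({i} : Finset (Fin m)) ≠ Finset.univ := fun i =>
    hsmall _ (by simpa using by omega)
  have hpair : ∀ i j : Fin m, ({i, j} : Finset (Fin m)) ≠ Finset.univ := fun i j =>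
    hsmall _ (lt_of_le_of_lt (Finset.card_insert_le _ _) (by simpa using by omega))
  let φ : ∀ i : Fin m, G →* H := fun i =>
    { toFun := fun a => f {i} (hsing i) (fun _ => a)
      map_one' := map_one (f {i} (hsing i))
      map_mul' := fun a b => map_mul (f {i} (hsing i)) (fun _ => a) (fun _ => b) }
  have hφ : ∀ (σ : Finset (Fin m)) (hσ : σ ≠ Finset.univ) (i : Fin m) (hi : i ∈ σ) (a : G),
      f σ hσ (fun x => if (x : Fin m) = i then a else 1) = φ i a := by
    intro σ hσ i hi a
    show f σ hσ (fun x => if (x : Fin m) = i then a else 1) = f {i} (hsing i) (fun _ => a)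
    rw [← hcomp {i} σ (hsing i) hσ (by simpa using hi) (fun _ => a)]
    congr 1
    funext x
    by_cases h : (x : Fin m) = i <;> simp [h]
  have hφcomm : Pairwise fun i j : Fin m => ∀ a b, Commute (φ i a) (φ j b) := by
    intro i j hij a b
    have h1 : f {i, j} (hpair i j) (fun x => if (x : Fin m) = i then a else 1) = φ i a :=
      hφ _ _ i (by simp) a
    have h2 : f {i, j} (hpair i j) (fun x => if (x : Fin m) = j then b else 1) = φ j b :=
      hφ _ _ j (by simp) b
    have key : ((fun x : ↥({i, j} : Finset (Fin m)) => if (x : Fin m) = i then a else 1) *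
        (fun x : ↥({i, j} : Finset (Fin m)) => if (x : Fin m) = j then b else 1)) =
        ((fun x : ↥({i, j} : Finset (Fin m)) => if (x : Fin m) = j then b else 1) *
        (fun x : ↥({i, j} : Finset (Fin m)) => if (x : Fin m) = i then a else 1)) := by
      funext x
      by_cases h : (x : Fin m) = i
      · have hx : ¬ ((x : Fin m) = j) := fun hj => hij (h.symm.trans hj)
        rw [Pi.mul_apply, Pi.mul_apply, if_pos h, if_neg hx, mul_one, one_mul]
      · simp [Pi.mul_apply, h]
    unfold Commute SemiconjBy
    rw [← h1, ← h2, ← map_mul, ← map_mul, key]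
  set F : (Fin m → G) →* H := MonoidHom.noncommPiCoprod φ hφcomm with hF
  have hFsingle : ∀ (i : Fin m) (a : G), F (Pi.mulSingle i a) = φ i a := fun i a =>
    MonoidHom.noncommPiCoprod_mulSingle φ i a
  have hmain : ∀ (σ : Finset (Fin m)) (hσ : σ ≠ Finset.univ) (g : ↥σ → G),
      F (fun i => if h : i ∈ σ then g ⟨i, h⟩ else 1) = f σ hσ g := by
    intro σ
    induction σ using Finset.induction_on with
    | empty =>
      intro hσ g
      have h1 : (fun i : Fin m => if h : i ∈ (∅ : Finset (Fin m)) then g ⟨i, h⟩ else 1) = 1 := by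
        funext i; simp
      have h2 : g = 1 := by
        funext x; exact (Finset.notMem_empty _ x.2).elim
      rw [h1, h2, map_one, map_one]
    | @insert a s ha ih =>
      intro hσ g
      have hs : s ≠ Finset.univ := fun he =>
        hσ (Finset.univ_subset_iff.mp (he ▸ Finset.subset_insert a s))
      have hamem : a ∈ insert a s := Finset.mem_insert_self a s
      set g' : ↥s → G := fun x => g ⟨x, Finset.mem_insert_of_mem x.2⟩ with hg'
      have hdec : (fun i : Fin m => if h : i ∈ insert a s then g ⟨i, h⟩ else 1) =
          (fun i : Fin m => if h : i ∈ s then g' ⟨i, h⟩ else 1) *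
          Pi.mulSingle a (g ⟨a, hamem⟩) := by
        funext i
        by_cases h1 : i ∈ s
        · have h2 : i ≠ a := fun he => ha (he ▸ h1)
          simp [Pi.mul_apply, h1, Finset.mem_insert_of_mem h1, Pi.mulSingle_apply, h2, hg']
        · by_cases h3 : i = a
          · subst h3
            simp [Pi.mul_apply, h1, Pi.mulSingle_apply]
          · simp [Pi.mul_apply, h1, h3, Pi.mulSingle_apply]
      have hdec2 : g = (fun x : ↥(insert a s) => if h : (x : Fin m) ∈ s then g' ⟨x, h⟩ else 1) *
          (fun x : ↥(insert a s) => if (x : Fin m) = a then g ⟨a, hamem⟩ else 1) := by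
        funext x
        by_cases h1 : (x : Fin m) ∈ s
        · have h2 : (x : Fin m) ≠ a := fun he => ha (he ▸ h1)
          simp [Pi.mul_apply, h1, h2, hg']
        · have h3 : (x : Fin m) = a := by
            rcases Finset.mem_insert.mp x.2 with h | h
            · exact h
            · exact absurd h h1
          simp only [Pi.mul_apply, dif_neg h1, if_pos h3, one_mul]
          exact congrArg g (Subtype.ext h3)
      rw [hdec, map_mul, ih hs g', hFsingle]
      conv_rhs => rw [hdec2]
      rw [map_mul, hcomp s (insert a s) hs hσ (Finset.subset_insert a s) g',
        hφ (insert a s) hσ a hamem]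
  refine ⟨F, hmain, ?_⟩
  intro F' hF'
  have hF'single : ∀ (i : Fin m) (a : G), F' (Pi.mulSingle i a) = φ i a := by
    intro i a
    show F' (Pi.mulSingle i a) = f {i} (hsing i) (fun _ => a)
    have := hF' {i} (hsing i) (fun _ => a)
    rw [← this]
    congr 1
    funext j
    by_cases h : j = i
    · simp [Pi.mulSingle_apply, h]
    · simp [Pi.mulSingle_apply, h, fun hh : j ∈ ({i} : Finset (Fin m)) =>
        h (Finset.mem_singleton.mp hh)]
  apply MonoidHom.ext
  intro g
  have hg := Finset.noncommProd_mulSingle g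
  calc F' g = F' (Finset.univ.noncommProd (fun i => Pi.mulSingle i (g i))
        fun i _ j _ _ => Pi.mulSingle_apply_commute g i j) := by rw [hg]
    _ = Finset.univ.noncommProd (fun i => F' (Pi.mulSingle i (g i))) _ :=
        Finset.map_noncommProd _ _ _ _
    _ = Finset.univ.noncommProd (fun i => F (Pi.mulSingle i (g i))) _ :=
        Finset.noncommProd_congr rfl (fun i _ => by rw [hF'single, hFsingle]) _
    _ = F (Finset.univ.noncommProd (fun i => Pi.mulSingle i (g i))
        fun i _ j _ _ => Pi.mulSingle_apply_commute g i j) :=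
        (Finset.map_noncommProd _ _ _ _).symm
    _ = F g := by rw [hg]
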